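/- Under hypotheses (F1) and (F2), for every λ > 0 the function h_λ satisfies h_λ(s) = o(s) as s → 0⁺; that is, the limit of h_λ(s)/s as s → 0⁺ equals 0. -/

import Mathlib

open Real Filter Topology

/-- The piecewise function `g` from the paper: `g(t) = sqrt(1 - κ t^2)` for `|t| < sqrt(1/(3κ))`,
and `g(t) = 1/(3 sqrt(2κ) |t|) + sqrt(1/6)` for `|t| ≥ sqrt(1/(3κ))`; in particular `g` is even. -/
noncomputable def gfun (κ : ℝ) (t : ℝ) : ℝ :=
  if |t| < Real.sqrt (1 / (3 * κ)) then Real.sqrt (1 - κ * t ^ 2)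
  else 1 / (3 * Real.sqrt (2 * κ) * |t|) + Real.sqrt (1 / 6)

/-- `G(t) = ∫ s in [0,t], g(s) ds`. -/
noncomputable def Gfun (κ : ℝ) (t : ℝ) : ℝ := ∫ s in (0:ℝ)..t, gfun κ s

/-- `G⁻¹`, the inverse function of `G`. -/
noncomputable def Ginv (κ : ℝ) : ℝ → ℝ := Function.invFun (Gfun κ)

/-- The transformed nonlinearity `h_λ(s) = f(G⁻¹ s)/g(G⁻¹ s) - λ G⁻¹ s / g(G⁻¹ s) + λ s`. -/
noncomputable def hlam (κ : ℝ) (f : ℝ → ℝ) (lam : ℝ) (s : ℝ) : ℝ :=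
  f (Ginv κ s) / gfun κ (Ginv κ s) - lam * Ginv κ s / gfun κ (Ginv κ s) + lam * s

/-! Since `f(0) = 0` and `f'(t) = O(t^(α-2)) → 0`, `f(t)/t → 0` as `t → 0⁺`. As `g` is bounded
between `√(1/6)` and a constant and `g(0) = 1` with `g` continuous at `0`, `G` is an increasing
bijection of `ℝ` with `G'(0) = 1`, so `G⁻¹(s)/s → 1` and `g(G⁻¹ s) → 1`. Writing `t = G⁻¹ s`,
`h_λ(s)/s = (f(t)/t - λ) (t/s) / g(t) + λ → (0 - λ) + λ = 0`. -/

open MeasureTheory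

section gfun

variable {κ : ℝ}

lemma mul_sq_lt_of_abs_lt_sqrt (hκ : 0 < κ) {t : ℝ} (ht : |t| < √(1 / (3 * κ))) :
    κ * t ^ 2 < 1 / 3 := by
  rw [Real.lt_sqrt (abs_nonneg t), sq_abs] at ht
  calc κ * t ^ 2 < κ * (1 / (3 * κ)) := by gcongr
    _ = 1 / 3 := by field_simp

lemma sqrt_one_div_six_le_gfun (hκ : 0 < κ) (t : ℝ) : √(1 / 6) ≤ gfun κ t := by
  unfold gfun
  split_ifs with ht
  · have := mul_sq_lt_of_abs_lt_sqrt hκ ht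
    exact Real.sqrt_le_sqrt (by linarith)
  · exact le_add_of_nonneg_left (by positivity)

lemma gfun_pos (hκ : 0 < κ) (t : ℝ) : 0 < gfun κ t :=
  (Real.sqrt_pos.2 (by norm_num)).trans_le (sqrt_one_div_six_le_gfun hκ t)

lemma exists_gfun_le (hκ : 0 < κ) : ∃ M, ∀ t, gfun κ t ≤ M := by
  set R := √(1 / (3 * κ))
  have hR : 0 < R := Real.sqrt_pos.2 (by positivity)
  refine ⟨max 1 (1 / (3 * √(2 * κ) * R) + √(1 / 6)), fun t => ?_⟩
  unfold gfun
  split_ifs with ht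
  · exact le_max_of_le_left (Real.sqrt_le_one.2 (by nlinarith [sq_nonneg t]))
  · refine le_max_of_le_right (add_le_add_left ?_ _)
    have : 0 < √(2 * κ) := Real.sqrt_pos.2 (by positivity)
    gcongr
    exact not_lt.1 ht

lemma measurable_gfun (κ : ℝ) : Measurable (gfun κ) := by
  unfold gfun
  refine Measurable.ite (measurableSet_lt measurable_abs measurable_const) ?_ ?_ <;> fun_prop

lemma intervalIntegrable_gfun (hκ : 0 < κ) (a b : ℝ) : IntervalIntegrable (gfun κ) volume a b := by
  obtain ⟨M, hM⟩ := exists_gfun_le hκ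
  refine (intervalIntegrable_const (c := M)).mono_fun'
    (measurable_gfun κ).aestronglyMeasurable (Eventually.of_forall fun t => ?_)
  simpa [abs_of_pos (gfun_pos hκ t)] using hM t

lemma gfun_zero (hκ : 0 < κ) : gfun κ 0 = 1 := by
  simp [gfun, hκ]

lemma continuousAt_gfun_zero (hκ : 0 < κ) : ContinuousAt (gfun κ) 0 := by
  have hnear : ∀ᶠ t in 𝓝 (0 : ℝ), √(1 - κ * t ^ 2) = gfun κ t := by
    have hR : |(0 : ℝ)| < √(1 / (3 * κ)) := by simpa using hκ
    filter_upwards [(isOpen_lt continuous_abs continuous_const).mem_nhds hR] with t ht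
    simp only [gfun, if_pos ht]
  exact ContinuousAt.congr (by fun_prop) hnear

end gfun

section Gfun

variable {κ : ℝ}

lemma Gfun_zero (κ : ℝ) : Gfun κ 0 = 0 := intervalIntegral.integral_same

lemma sqrt_one_div_six_mul_sub_le_Gfun_sub (hκ : 0 < κ) {a b : ℝ} (hab : a ≤ b) :
    √(1 / 6) * (b - a) ≤ Gfun κ b - Gfun κ a := by
  rw [Gfun, Gfun, intervalIntegral.integral_interval_sub_left (intervalIntegrable_gfun hκ 0 b)
    (intervalIntegrable_gfun hκ 0 a)]
  simpa [mul_comm] using intervalIntegral.integral_mono_on hab intervalIntegrable_const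
    (intervalIntegrable_gfun hκ a b) fun t _ => sqrt_one_div_six_le_gfun hκ t

lemma Gfun_strictMono (hκ : 0 < κ) : StrictMono (Gfun κ) := fun a b hab => by
  have := sqrt_one_div_six_mul_sub_le_Gfun_sub hκ hab.le
  have : 0 < √(1 / 6) * (b - a) := mul_pos (Real.sqrt_pos.2 (by norm_num)) (sub_pos.2 hab)
  linarith

lemma continuous_Gfun (hκ : 0 < κ) : Continuous (Gfun κ) :=
  intervalIntegral.continuous_primitive (intervalIntegrable_gfun hκ) 0

lemma Gfun_surjective (hκ : 0 < κ) : Function.Surjective (Gfun κ) := by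
  have hc : (0 : ℝ) < √(1 / 6) := Real.sqrt_pos.2 (by norm_num)
  refine (continuous_Gfun hκ).surjective ?_ ?_
  · refine tendsto_atTop_mono' _ ?_ (tendsto_id.const_mul_atTop hc)
    filter_upwards [eventually_ge_atTop 0] with t ht
    simpa [Gfun_zero] using sqrt_one_div_six_mul_sub_le_Gfun_sub hκ ht
  · refine tendsto_atBot_mono' _ ?_ (tendsto_id.const_mul_atBot hc)
    filter_upwards [eventually_le_atBot 0] with t ht
    have := sqrt_one_div_six_mul_sub_le_Gfun_sub hκ ht
    simp only [Gfun_zero, zero_sub] at this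
    simp only [id]
    linarith

lemma hasDerivAt_Gfun_zero (hκ : 0 < κ) : HasDerivAt (Gfun κ) 1 0 := by
  have := intervalIntegral.integral_hasDerivAt_right (intervalIntegrable_gfun hκ 0 0)
    (measurable_gfun κ).stronglyMeasurable.stronglyMeasurableAtFilter (continuousAt_gfun_zero hκ)
  rwa [gfun_zero hκ] at this

end Gfun

section Ginv

variable {κ : ℝ}

lemma Ginv_Gfun (hκ : 0 < κ) (t : ℝ) : Ginv κ (Gfun κ t) = t :=
  Function.leftInverse_invFun (Gfun_strictMono hκ).injective t

lemma Gfun_Ginv (hκ : 0 < κ) (s : ℝ) : Gfun κ (Ginv κ s) = s :=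
  Function.rightInverse_invFun (Gfun_surjective hκ) s

lemma Ginv_zero (hκ : 0 < κ) : Ginv κ 0 = 0 := by
  simpa [Gfun_zero] using Ginv_Gfun hκ 0

lemma Ginv_strictMono (hκ : 0 < κ) : StrictMono (Ginv κ) := fun a b hab =>
  (Gfun_strictMono hκ).lt_iff_lt.1 (by rwa [Gfun_Ginv hκ, Gfun_Ginv hκ])

lemma continuous_Ginv (hκ : 0 < κ) : Continuous (Ginv κ) :=
  (Ginv_strictMono hκ).monotone.continuous_of_surjective fun t => ⟨_, Ginv_Gfun hκ t⟩

lemma tendsto_Ginv_nhdsGT_zero (hκ : 0 < κ) :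
    Tendsto (Ginv κ) (𝓝[>] 0) (𝓝[>] 0) := by
  refine tendsto_nhdsWithin_iff.2 ⟨?_, ?_⟩
  · simpa [Ginv_zero hκ] using (continuous_Ginv hκ).continuousAt.tendsto.mono_left
      (nhdsWithin_le_nhds (a := (0 : ℝ)) (s := Set.Ioi 0))
  · filter_upwards [self_mem_nhdsWithin] with s (hs : 0 < s)
    simpa [Ginv_zero hκ] using Ginv_strictMono hκ hs

lemma tendsto_Ginv_div_self (hκ : 0 < κ) :
    Tendsto (fun s => Ginv κ s / s) (𝓝[>] 0) (𝓝 1) := by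
  have hderiv : HasDerivAt (Ginv κ) 1 0 := by
    simpa using HasDerivAt.of_local_left_inverse (continuous_Ginv hκ).continuousAt
      (by simpa [Ginv_zero hκ] using hasDerivAt_Gfun_zero hκ) one_ne_zero
      (Eventually.of_forall (Gfun_Ginv hκ))
  refine ((hasDerivAt_iff_tendsto_slope.1 hderiv).mono_left (nhdsGT_le_nhdsNE 0)).congr fun s => ?_
  simp [slope_def_field, Ginv_zero hκ]

end Ginv

lemma tendsto_zero_of_tendsto_div_rpow {φ : ℝ → ℝ} {p c : ℝ} (hp : 0 < p)
    (h : Tendsto (fun t => φ t / t ^ p) (𝓝[>] 0) (𝓝 c)) : Tendsto φ (𝓝[>] 0) (𝓝 0) := by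
  have hpow : Tendsto (fun t : ℝ => t ^ p) (𝓝[>] 0) (𝓝 0) := by
    simpa [Real.zero_rpow hp.ne'] using
      (Real.continuousAt_rpow_const 0 p (Or.inr hp.le)).tendsto.mono_left nhdsWithin_le_nhds
  simpa using (h.mul hpow).congr' <| by
    filter_upwards [self_mem_nhdsWithin] with t (ht : 0 < t)
    field_simp [(Real.rpow_pos_of_pos ht p).ne']

lemma tendsto_div_self_of_tendsto_deriv {f : ℝ → ℝ} (hf : ContDiffOn ℝ 1 f (Set.Ici 0))
    (hf0 : f 0 = 0) (hf' : Tendsto (deriv f) (𝓝[>] 0) (𝓝 0)) :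
    Tendsto (fun t => f t / t) (𝓝[>] 0) (𝓝 0) := by
  have hderiv : HasDerivWithinAt f 0 (Set.Ici 0) 0 :=
    hasDerivWithinAt_Ici_of_tendsto_deriv
      ((hf.differentiableOn one_ne_zero).mono Set.Ioi_subset_Ici_self)
      ((hf.continuousOn 0 Set.self_mem_Ici).mono Set.Ioi_subset_Ici_self)
      self_mem_nhdsWithin hf'
  rw [hasDerivWithinAt_iff_tendsto_slope, Set.Ici_sdiff_left] at hderiv
  refine hderiv.congr fun t => ?_
  simp [slope_def_field, hf0]

lemma hlam_div_self {κ : ℝ} (hκ : 0 < κ) (f : ℝ → ℝ) (lam : ℝ) {s : ℝ} (hs : 0 < s) :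
    hlam κ f lam s / s =
      (f (Ginv κ s) / Ginv κ s - lam) * (Ginv κ s / s) / gfun κ (Ginv κ s) + lam := by
  have ht : Ginv κ s ≠ 0 := by
    simpa [Ginv_zero hκ] using (Ginv_strictMono hκ hs).ne'
  have hg := (gfun_pos hκ (Ginv κ s)).ne'
  unfold hlam
  field_simp

theorem stmt_15_general (N : ℕ) (f : ℝ → ℝ)
    (hf1 : ContDiffOn ℝ 1 f (Set.Ici (0 : ℝ))) (hf0 : f 0 = 0)
    (α μ₁ : ℝ)
    (hα : 2 < α ∧ α < 2 * N / (N - 2))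
    (hd0 : Tendsto (fun t : ℝ => deriv f t / t ^ (α - 2)) (𝓝[>] (0 : ℝ))
      (𝓝 (μ₁ * (α - 1))))
    (κ : ℝ) (hκ : 0 < κ) (lam : ℝ) :
    Tendsto (fun s : ℝ => hlam κ f lam s / s) (𝓝[>] (0 : ℝ)) (𝓝 0) := by
  have hG := tendsto_Ginv_nhdsGT_zero hκ
  have hf : Tendsto (fun s => f (Ginv κ s) / Ginv κ s) (𝓝[>] 0) (𝓝 0) :=
    (tendsto_div_self_of_tendsto_deriv hf1 hf0
      (tendsto_zero_of_tendsto_div_rpow (sub_pos.2 hα.1) hd0)).comp hG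
  have hg : Tendsto (fun s => gfun κ (Ginv κ s)) (𝓝[>] 0) (𝓝 1) := by
    simpa [gfun_zero hκ, Function.comp_def] using
      (continuousAt_gfun_zero hκ).tendsto.comp (hG.mono_right nhdsWithin_le_nhds)
  have hlim :=
    (((hf.sub_const lam).mul (tendsto_Ginv_div_self hκ)).div hg one_ne_zero).add_const lam
  rw [zero_sub, mul_one, div_one, neg_add_cancel] at hlim
  refine hlim.congr' ?_
  filter_upwards [self_mem_nhdsWithin] with s hs
  exact (hlam_div_self hκ f lam hs).symm

/-- under (F1)-(F2), for every `λ > 0`, `h_λ(s)/s → 0` as `s → 0⁺`. -/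
theorem stmt_15 (N : ℕ) (hN : 3 ≤ N) (f : ℝ → ℝ)
    (hf1 : ContDiffOn ℝ 1 f (Set.Ici (0 : ℝ))) (hf0 : f 0 = 0)
    (hfpos : ∀ s : ℝ, 0 < s → 0 < f s)
    (α β μ₁ μ₂ : ℝ)
    (hα : 2 < α ∧ α < 2 * N / (N - 2)) (hβ : 2 < β ∧ β < 2 * N / (N - 2))
    (hμ₁ : 0 < μ₁) (hμ₂ : 0 < μ₂)
    (hd0 : Tendsto (fun t : ℝ => deriv f t / t ^ (α - 2)) (𝓝[>] (0 : ℝ))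
      (𝓝 (μ₁ * (α - 1))))
    (hdinf : Tendsto (fun t : ℝ => deriv f t / t ^ (β - 2)) atTop
      (𝓝 (μ₂ * (β - 1))))
    (κ : ℝ) (hκ : 0 < κ) (lam : ℝ) (hlam_pos : 0 < lam) :
    Tendsto (fun s : ℝ => hlam κ f lam s / s) (𝓝[>] (0 : ℝ)) (𝓝 0) :=
  stmt_15_general N f hf1 hf0 α μ₁ hα hd0 κ hκ lam
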